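/- Let w_1 ≤ … ≤ w_n be general power-law weights with exponent β, let δ be a real number, and suppose β = δ + 1 + ε for some ε > 0. Then there exists a constant c > 0 (independent of n and l) such that for all integers 1 ≤ l ≤ n: ∑_{S ⊆ [n], |S| = l} ∏_{i ∈ S} w_i^δ ≤ n^l · c^l / l!. -/

import Mathlib

/-!
By the multinomial theorem, every `l`-subset `S` contributes the term `l! ∏_{i ∈ S} aᵢ` to
`(∑ᵢ aᵢ) ^ l`, so for nonnegative `aᵢ` the sum over `l`-subsets is at most `(∑ᵢ aᵢ) ^ l / l!`.
It therefore suffices that `∑ᵢ wᵢ ^ δ = O(n)`. For `δ ≤ 0` this holds because `wᵢ ≥ w₁ = Θ(1)`.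
For `δ > 0`, cut the weights into dyadic shells `[2ʲ w₁, 2ʲ⁺¹ w₁)`: by the tail bound at most
`α₂ n (2ʲ w₁) ^ (-(δ + ε))` weights reach the `j`-th shell, each contributing at most
`(2ʲ⁺¹ w₁) ^ δ`, so shell `j` contributes `O(n 2^(-ε j))`, a convergent geometric series.
-/

open Finset Filter
open scoped BigOperators Classical

namespace PLSAT

/-- A clause on `n` variables with `k` literals: each literal is a variable index
together with a sign (`true` = positive occurrence, `false` = negated). -/
abbrev Clause (n k : ℕ) := Fin k → Fin n × Bool

/-- A CNF formula with `m` clauses, each with `k` literals on `n` variables. -/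
abbrev Formula (n m k : ℕ) := Fin m → Clause n k

/-- Assignment `A` satisfies clause `c`. -/
def ClauseSat {n k : ℕ} (A : Fin n → Bool) (c : Clause n k) : Prop :=
  ∃ i, A (c i).1 = (c i).2

/-- Assignment `A` satisfies formula `Φ`. -/
def Sat {n m k : ℕ} (A : Fin n → Bool) (Φ : Formula n m k) : Prop :=
  ∀ j, ClauseSat A (Φ j)

def Satisfiable {n m k : ℕ} (Φ : Formula n m k) : Prop := ∃ A, Sat A Φ

/-- `p` is a probability vector. -/
def IsProbVec (n : ℕ) (p : Fin n → ℝ) : Prop := (∀ i, 0 ≤ p i) ∧ ∑ i, p i = 1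

/-- Normalizing constant: the probability that `k` i.i.d. draws from `p` are pairwise
distinct (sum over ordered injective tuples of the product of probabilities). -/
noncomputable def Z (n k : ℕ) (p : Fin n → ℝ) : ℝ :=
  ∑ v : Fin k → Fin n, if Function.Injective v then ∏ i, p (v i) else 0

/-- Probability of sampling the (ordered, signed) clause `c`: the `k` variables are
i.i.d. from `p` conditioned on being pairwise distinct, and each sign is uniform. -/
noncomputable def clauseProb (n k : ℕ) (p : Fin n → ℝ) (c : Clause n k) : ℝ :=
  (if Function.Injective (fun i => (c i).1) then ∏ i, p (c i).1 else 0) / (2 ^ k * Z n k p)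

/-- Probability of sampling the formula `Φ` (clauses independent). -/
noncomputable def formulaProb (n m k : ℕ) (p : Fin n → ℝ) (Φ : Formula n m k) : ℝ :=
  ∏ j, clauseProb n k p (Φ j)

/-- Probability of the event `P` under the random `k`-SAT model. -/
noncomputable def Pr (n m k : ℕ) (p : Fin n → ℝ) (P : Formula n m k → Prop) : ℝ :=
  ∑ Φ : Formula n m k, if P Φ then formulaProb n m k p Φ else 0

/-- Smallest weight `w₁` (weights are sorted non-decreasingly). -/
noncomputable def wmin (n : ℕ) (w : Fin n → ℝ) : ℝ :=
  if h : 0 < n then w ⟨0, h⟩ else 0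

/-- Largest weight `wₙ`. -/
noncomputable def wmax (n : ℕ) (w : Fin n → ℝ) : ℝ :=
  if h : 0 < n then w ⟨n - 1, Nat.sub_lt h one_pos⟩ else 0

/-- Empirical tail function `F(x) = |{i : wᵢ ≥ x}| / n`. -/
noncomputable def tailF (n : ℕ) (w : Fin n → ℝ) (x : ℝ) : ℝ :=
  ((Finset.univ.filter fun i => x ≤ w i).card : ℝ) / n

/-- Strict empirical tail function `F^>(x) = |{i : wᵢ > x}| / n`. -/
noncomputable def tailFgt (n : ℕ) (w : Fin n → ℝ) (x : ℝ) : ℝ :=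
  ((Finset.univ.filter fun i => x < w i).card : ℝ) / n

/-- The family `w` of weight sequences follows a general power law with exponent `β`
and tail constants `α₁ ≤ α₂`: the weights are sorted non-decreasingly and positive,
`w₁ = Θ(1)`, `wₙ = Θ(n^{1/(β-1)})`, and for all `x ∈ [w₁, wₙ]` it holds
`α₁ x^{1-β} ≤ F(x) ≤ α₂ x^{1-β}`. -/
structure IsPowerLawFamily (β α₁ α₂ : ℝ) (w : (n : ℕ) → Fin n → ℝ) : Prop where
  mono : ∀ n, Monotone (w n)
  pos : ∀ n i, 0 < w n i
  α₁_pos : 0 < α₁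
  α₁_le_α₂ : α₁ ≤ α₂
  wmin_theta : ∃ c₁ c₂ : ℝ, 0 < c₁ ∧ ∀ᶠ n in atTop,
      c₁ ≤ wmin n (w n) ∧ wmin n (w n) ≤ c₂
  wmax_theta : ∃ d₁ d₂ : ℝ, 0 < d₁ ∧ ∀ᶠ n : ℕ in atTop,
      d₁ * (n : ℝ) ^ (1 / (β - 1)) ≤ wmax n (w n) ∧
      wmax n (w n) ≤ d₂ * (n : ℝ) ^ (1 / (β - 1))
  tail : ∀ n, 0 < n → ∀ x : ℝ, wmin n (w n) ≤ x → x ≤ wmax n (w n) →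
      α₁ * x ^ (1 - β) ≤ tailF n (w n) x ∧ tailF n (w n) x ≤ α₂ * x ^ (1 - β)

/-- Probabilities induced by weights: `pᵢ = wᵢ / ∑ⱼ wⱼ`. -/
noncomputable def plp (n : ℕ) (w : Fin n → ℝ) (i : Fin n) : ℝ := w i / ∑ j, w j

theorem sum_boole_mem_of_subset {ι : Type*} {s S : Finset ι} (hS : S ⊆ s) :
    ∑ i ∈ s, (if i ∈ S then 1 else 0 : ℕ) = #S := by
  rw [sum_boole, filter_mem_eq_inter, inter_eq_right.2 hS, Nat.cast_id]

theorem multinomial_boole {ι : Type*} {s S : Finset ι} (hS : S ⊆ s) :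
    Nat.multinomial s (fun i => if i ∈ S then 1 else 0) = (#S).factorial := by
  have h := Nat.multinomial_spec s (fun i => if i ∈ S then 1 else 0)
  rwa [prod_eq_one fun i _ => by split_ifs <;> rfl, one_mul, sum_boole_mem_of_subset hS] at h

theorem sum_powersetCard_prod_mul_factorial_le {ι : Type*} (s : Finset ι) (a : ι → ℝ)
    (ha : ∀ i ∈ s, 0 ≤ a i) (l : ℕ) :
    (∑ S ∈ s.powersetCard l, ∏ i ∈ S, a i) * l.factorial ≤ (∑ i ∈ s, a i) ^ l := by
  set ind : Finset ι → ι → ℕ := fun S i => if i ∈ S then 1 else 0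
  have hind_inj : Set.InjOn ind (s.powersetCard l) := by
    intro S _ T _ h
    ext i
    have := congr_fun h i
    by_cases hS : i ∈ S <;> by_cases hT : i ∈ T <;> simp_all [ind]
  have hind_mem : ∀ S ∈ s.powersetCard l, ind S ∈ s.piAntidiag l := by
    intro S hS
    obtain ⟨hSs, hcard⟩ := mem_powersetCard.1 hS
    refine mem_piAntidiag.2 ⟨(sum_boole_mem_of_subset hSs).trans hcard, fun i hi => hSs ?_⟩
    simpa [ind] using hi
  have hterm : ∀ S ∈ s.powersetCard l,
      (∏ i ∈ S, a i) * l.factorial = Nat.multinomial s (ind S) * ∏ i ∈ s, a i ^ ind S i := by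
    intro S hS
    obtain ⟨hSs, rfl⟩ := mem_powersetCard.1 hS
    rw [multinomial_boole hSs, prod_congr rfl fun i _ => (pow_ite ..).trans (by
      rw [pow_one, pow_zero]), prod_ite_mem, inter_eq_right.2 hSs, mul_comm]
  calc (∑ S ∈ s.powersetCard l, ∏ i ∈ S, a i) * l.factorial
      = ∑ k ∈ (s.powersetCard l).image ind, Nat.multinomial s k * ∏ i ∈ s, a i ^ k i := by
        rw [sum_mul, sum_image hind_inj]
        exact sum_congr rfl hterm
    _ ≤ ∑ k ∈ s.piAntidiag l, Nat.multinomial s k * ∏ i ∈ s, a i ^ k i := by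
        refine sum_le_sum_of_subset_of_nonneg (image_subset_iff.2 hind_mem) fun k _ _ => ?_
        exact mul_nonneg (Nat.cast_nonneg _) (prod_nonneg fun i hi => pow_nonneg (ha i hi) _)
    _ = (∑ i ∈ s, a i) ^ l := (sum_pow_eq_sum_piAntidiag s a l).symm

theorem rpow_le_sum_dyadic {m x δ : ℝ} (hm : 0 ≤ m) (hx : m ≤ x) (hδ : 0 ≤ δ) :
    ∀ J : ℕ, x < 2 ^ J * m →
      x ^ δ ≤ ∑ j ∈ range J, if 2 ^ j * m ≤ x then (2 ^ (j + 1) * m) ^ δ else 0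
  | 0, hJ => absurd hx (by simpa using hJ)
  | J + 1, hJ => by
    have hterm_nonneg : 0 ≤ if 2 ^ J * m ≤ x then (2 ^ (J + 1) * m) ^ δ else 0 := by
      split_ifs <;> positivity
    rw [sum_range_succ]
    by_cases hxJ : x < 2 ^ J * m
    · exact le_add_of_le_of_nonneg (rpow_le_sum_dyadic hm hx hδ J hxJ) hterm_nonneg
    · rw [if_pos (not_lt.1 hxJ)]
      refine le_add_of_nonneg_of_le (sum_nonneg fun j _ => ?_) ?_
      · split_ifs <;> positivity
      · exact Real.rpow_le_rpow (hm.trans hx) hJ.le hδ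

theorem dyadic_rpow_mul_rpow {m : ℝ} (hm : 0 < m) (δ ε : ℝ) (j : ℕ) :
    (2 ^ j * m) ^ (-(δ + ε)) * (2 ^ (j + 1) * m) ^ δ = 2 ^ δ * m ^ (-ε) * (2 ^ (-ε)) ^ j := by
  have hpos : 0 < (2 : ℝ) ^ j * m := by positivity
  have hsucc : (2 ^ (j + 1) * m) ^ δ = 2 ^ δ * (2 ^ j * m) ^ δ := by
    rw [pow_succ', mul_assoc, Real.mul_rpow zero_le_two hpos.le]
  rw [hsucc, mul_left_comm, ← Real.rpow_add hpos, show -(δ + ε) + δ = -ε by ring,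
    Real.mul_rpow (by positivity) hm.le, ← Real.rpow_pow_comm zero_le_two]
  ring

theorem exists_forall_lt_two_pow_mul {ι : Type*} (s : Finset ι) (a : ι → ℝ) {m : ℝ}
    (hm : 0 < m) : ∃ J : ℕ, ∀ i ∈ s, a i < 2 ^ J * m := by
  have h := (tendsto_pow_atTop_atTop_of_one_lt one_lt_two).atTop_mul_const hm
  exact ((Filter.eventually_all_finset s).2 fun i _ => h.eventually_gt_atTop (a i)).exists

theorem sum_rpow_le_of_card_le {ι : Type*} (s : Finset ι) (a : ι → ℝ) {m C δ ε : ℝ}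
    (hm : 0 < m) (hC : 0 ≤ C) (hδ : 0 ≤ δ) (hε : 0 < ε) (hma : ∀ i ∈ s, m ≤ a i)
    (hcard : ∀ x, m ≤ x → (#{i ∈ s | x ≤ a i} : ℝ) ≤ C * x ^ (-(δ + ε))) :
    ∑ i ∈ s, a i ^ δ ≤ C * 2 ^ δ * m ^ (-ε) / (1 - 2 ^ (-ε)) := by
  have hq : (2 : ℝ) ^ (-ε) < 1 := Real.rpow_lt_one_of_one_lt_of_neg one_lt_two (neg_lt_zero.2 hε)
  obtain ⟨J, hJ⟩ := exists_forall_lt_two_pow_mul s a hm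
  calc ∑ i ∈ s, a i ^ δ
      ≤ ∑ i ∈ s, ∑ j ∈ range J, if 2 ^ j * m ≤ a i then (2 ^ (j + 1) * m) ^ δ else 0 :=
        sum_le_sum fun i hi => rpow_le_sum_dyadic hm.le (hma i hi) hδ J (hJ i hi)
    _ = ∑ j ∈ range J, (#{i ∈ s | 2 ^ j * m ≤ a i} : ℝ) * (2 ^ (j + 1) * m) ^ δ := by
        rw [sum_comm]
        simp only [← sum_filter, sum_const, nsmul_eq_mul]
    _ ≤ ∑ j ∈ range J, C * (2 ^ j * m) ^ (-(δ + ε)) * (2 ^ (j + 1) * m) ^ δ := by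
        refine sum_le_sum fun j _ => mul_le_mul_of_nonneg_right (hcard _ ?_) (by positivity)
        exact le_mul_of_one_le_left hm.le (one_le_pow₀ one_le_two)
    _ = C * 2 ^ δ * m ^ (-ε) * ∑ j ∈ range J, (2 ^ (-ε)) ^ j := by
        simp only [mul_assoc, dyadic_rpow_mul_rpow hm, mul_sum]
    _ ≤ C * 2 ^ δ * m ^ (-ε) * ((2 ^ (-ε)) ^ 0 / (1 - 2 ^ (-ε))) := by
        rw [range_eq_Ico]
        exact mul_le_mul_of_nonneg_left (geom_sum_Ico_le_of_lt_one (by positivity) hq)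
          (by positivity)
    _ = C * 2 ^ δ * m ^ (-ε) / (1 - 2 ^ (-ε)) := by rw [pow_zero, mul_one_div]

theorem wmin_le {n : ℕ} {w : Fin n → ℝ} (hw : Monotone w) (i : Fin n) : wmin n w ≤ w i := by
  rw [wmin, dif_pos i.pos]
  exact hw (Nat.zero_le _)

theorem le_wmax {n : ℕ} {w : Fin n → ℝ} (hw : Monotone w) (i : Fin n) : w i ≤ wmax n w := by
  rw [wmax, dif_pos i.pos]
  exact hw (Nat.le_sub_one_of_lt i.isLt)

namespace IsPowerLawFamily

variable {β α₁ α₂ : ℝ} {w : (n : ℕ) → Fin n → ℝ}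

theorem card_le (hw : IsPowerLawFamily β α₁ α₂ w) {n : ℕ} (hn : 0 < n) {x : ℝ}
    (hx : wmin n (w n) ≤ x) : (#{i | x ≤ w n i} : ℝ) ≤ α₂ * n * x ^ (1 - β) := by
  by_cases hxM : x ≤ wmax n (w n)
  · have h := (hw.tail n hn x hx hxM).2
    rwa [tailF, div_le_iff₀ (Nat.cast_pos.2 hn), mul_right_comm] at h
  · have hx0 : 0 < x := (hw.pos n ⟨0, hn⟩).trans_le (by rwa [wmin, dif_pos hn] at hx)
    have hα₂ : 0 < α₂ := hw.α₁_pos.trans_le hw.α₁_le_α₂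
    rw [filter_eq_empty_iff.2 fun i _ => not_le.2 ((le_wmax (hw.mono n) i).trans_lt
      (not_le.1 hxM)), card_empty, Nat.cast_zero]
    positivity

theorem exists_sum_rpow_le {δ ε : ℝ} (hε : 0 < ε) (hβ : β = δ + 1 + ε)
    (hw : IsPowerLawFamily β α₁ α₂ w) : ∃ K : ℝ, ∀ᶠ n in atTop, ∑ i, w n i ^ δ ≤ K * n := by
  obtain ⟨c₁, _, hc₁, hmin⟩ := hw.wmin_theta
  rcases le_or_gt δ 0 with hδ | hδ
  · refine ⟨c₁ ^ δ, ?_⟩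
    filter_upwards [hmin] with n hn
    calc ∑ i, w n i ^ δ ≤ ∑ _i : Fin n, c₁ ^ δ := sum_le_sum fun i _ =>
          Real.rpow_le_rpow_of_nonpos hc₁ (hn.1.trans (wmin_le (hw.mono n) i)) hδ
      _ = c₁ ^ δ * n := by simp [mul_comm]
  · have hα₂ : 0 < α₂ := hw.α₁_pos.trans_le hw.α₁_le_α₂
    have hexp : 1 - β = -(δ + ε) := by rw [hβ]; ring
    refine ⟨α₂ * 2 ^ δ * c₁ ^ (-ε) / (1 - 2 ^ (-ε)), ?_⟩
    filter_upwards [hmin, eventually_gt_atTop 0] with n hn hn0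
    have hq : 0 < 1 - (2 : ℝ) ^ (-ε) :=
      sub_pos.2 (Real.rpow_lt_one_of_one_lt_of_neg one_lt_two (neg_lt_zero.2 hε))
    calc ∑ i, w n i ^ δ
        ≤ α₂ * n * 2 ^ δ * wmin n (w n) ^ (-ε) / (1 - 2 ^ (-ε)) :=
          sum_rpow_le_of_card_le univ (w n) (hc₁.trans_le hn.1) (by positivity) hδ.le hε
            (fun i _ => wmin_le (hw.mono n) i) fun x hx => by
              simpa only [hexp] using hw.card_le hn0 hx
      _ ≤ α₂ * n * 2 ^ δ * c₁ ^ (-ε) / (1 - 2 ^ (-ε)) := by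
          gcongr α₂ * n * 2 ^ δ * ?_ / _
          exact Real.rpow_le_rpow_of_nonpos hc₁ hn.1 (neg_nonpos.2 hε.le)
      _ = α₂ * 2 ^ δ * c₁ ^ (-ε) / (1 - 2 ^ (-ε)) * n := by ring

end IsPowerLawFamily

/-- For power-law weights with exponent `β = δ + 1 + ε` (`ε > 0`),
there is a constant `c > 0` with `∑_{S ⊆ [n], |S| = l} ∏_{i ∈ S} wᵢ^δ ≤ nˡ cˡ / l!`
for all `1 ≤ l ≤ n`. -/
theorem subset_product_sum_bound (β α₁ α₂ δ ε : ℝ) (hε : 0 < ε)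
    (hβ : β = δ + 1 + ε)
    (w : (n : ℕ) → Fin n → ℝ) (hw : IsPowerLawFamily β α₁ α₂ w) :
    ∃ c : ℝ, 0 < c ∧ ∀ᶠ n : ℕ in atTop, ∀ l : ℕ, 1 ≤ l → l ≤ n →
      (∑ S ∈ Finset.powersetCard l (Finset.univ : Finset (Fin n)),
          ∏ i ∈ S, (w n i) ^ δ)
        ≤ (n : ℝ) ^ l * c ^ l / (Nat.factorial l : ℝ) := by
  obtain ⟨K, hK⟩ := hw.exists_sum_rpow_le hε hβ
  refine ⟨max K 1, one_pos.trans_le (le_max_right _ _), ?_⟩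
  filter_upwards [hK] with n hn l _ _
  have hnonneg : ∀ i ∈ univ, 0 ≤ w n i ^ δ := fun i _ => Real.rpow_nonneg (hw.pos n i).le δ
  have hsum : ∑ i, w n i ^ δ ≤ n * max K 1 :=
    hn.trans (by rw [mul_comm]; gcongr; exact le_max_left _ _)
  rw [le_div_iff₀ (by positivity), ← mul_pow]
  exact (sum_powersetCard_prod_mul_factorial_le univ _ hnonneg l).trans
    (pow_le_pow_left₀ (sum_nonneg hnonneg) hsum l)

end PLSAT
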